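/- For every integer k at least 1, let G_k be the graph that arises from the cycle u_0 u_1 ... u_{3k+2} u_0 by adding the k+1 edges u_0 u_2, u_3 u_5, ..., u_{3k} u_{3k+2}, and by adding one further universal vertex adjacent to all of u_0, ..., u_{3k+2}. Then G_k has 3k+4 vertices and 7k+7 edges, G_k is 3-connected, and, for every vertex u of G_k, the subgraph of G_k induced by the neighborhood of u contains a cycle. -/
import Mathlib


/-- A graph is `k`-connected if it has more than `k` vertices and deleting any set of
fewer than `k` vertices leaves a connected graph. -/
def KConnected {V : Type*} [Fintype V] (k : ℕ) (G : SimpleGraph V) : Prop :=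
  k < Fintype.card V ∧ ∀ S : Finset V, S.card < k → (G.induce (↑S : Set V)ᶜ).Connected

/-- The graph `G_k` arising from the cycle `u₀ u₁ … u_{3k+2} u₀` by adding the `k + 1`
edges `u₀u₂, u₃u₅, …, u_{3k}u_{3k+2}` and one further universal vertex `Sum.inr ()`
adjacent to all of `u₀, …, u_{3k+2}`. -/
def extremalGraph (k : ℕ) : SimpleGraph (Fin (3 * k + 3) ⊕ Unit) :=
  SimpleGraph.fromRel fun p q =>
    match p, q with
    | Sum.inl i, Sum.inl j =>
        ((i : ℕ) + 1) % (3 * k + 3) = (j : ℕ) ∨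
        ((i : ℕ) % 3 = 0 ∧ (j : ℕ) = (i : ℕ) + 2)
    | Sum.inl _, Sum.inr _ => True
    | _, _ => False

open SimpleGraph

section Helpers

lemma triangle_not_acyclic {V : Type*} {G : SimpleGraph V} {a b c : V}
    (hab : G.Adj a b) (hbc : G.Adj b c) (hca : G.Adj c a) : ¬ G.IsAcyclic := by
  intro h
  have := h (Walk.cons hab (Walk.cons hbc (Walk.cons hca Walk.nil)))
  apply this
  have h1 : a ≠ b := hab.ne
  have h2 : b ≠ c := hbc.ne
  have h3 : c ≠ a := hca.ne
  simp [Walk.isCycle_def, Walk.isTrail_def, h1, h2, h3, Sym2.eq_iff, h1.symm, h2.symm, h3.symm]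

lemma modfact {n a : ℕ} (h : a < n + n) :
    (a < n ∧ a % n = a) ∨ (n ≤ a ∧ a % n + n = a) := by
  rcases Nat.lt_or_ge a n with h'|h'
  · exact Or.inl ⟨h', Nat.mod_eq_of_lt h'⟩
  · refine Or.inr ⟨h', ?_⟩
    rw [Nat.mod_eq_sub_mod h', Nat.mod_eq_of_lt (by omega)]
    omega

lemma adj_inl_inr (k : ℕ) (i : Fin (3*k+3)) (u : Unit) :
    (extremalGraph k).Adj (Sum.inl i) (Sum.inr u) := by
  simp [extremalGraph, SimpleGraph.fromRel_adj]

lemma adj_inl_inl (k : ℕ) (i j : Fin (3*k+3)) :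
    (extremalGraph k).Adj (Sum.inl i) (Sum.inl j) ↔ i ≠ j ∧
      ((((i:ℕ)+1) % (3*k+3) = j ∨ ((i:ℕ)%3 = 0 ∧ (j:ℕ) = (i:ℕ)+2)) ∨
       (((j:ℕ)+1) % (3*k+3) = i ∨ ((j:ℕ)%3 = 0 ∧ (i:ℕ) = (j:ℕ)+2))) := by
  simp [extremalGraph, SimpleGraph.fromRel_adj]

lemma base_ne (k : ℕ) (i0 : Fin (3*k+3)) :
    (⟨(i0.val+1) % (3*k+3), Nat.mod_lt _ (by omega)⟩ : Fin (3*k+3)) ≠ i0 := by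
  intro h
  have := congrArg Fin.val h
  simp only at this
  rcases modfact (n := 3*k+3) (a := i0.val+1) (by omega) with ⟨h1,h2⟩|⟨h1,h2⟩ <;> omega

lemma adj_cycle' (k : ℕ) {x y : ℕ} (hx : x < 3*k+3) (hy : y < 3*k+3) (h : y = x + 1) :
    (extremalGraph k).Adj (Sum.inl ⟨x,hx⟩) (Sum.inl ⟨y,hy⟩) := by
  subst h
  rw [adj_inl_inl]
  exact ⟨Fin.ne_of_val_ne (show x ≠ x + 1 by omega),
    Or.inl (Or.inl (Nat.mod_eq_of_lt hy))⟩

lemma adj_chord' (k : ℕ) {x y : ℕ} (hx : x < 3*k+3) (hy : y < 3*k+3) (h3 : x % 3 = 0)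
    (h : y = x + 2) : (extremalGraph k).Adj (Sum.inl ⟨x,hx⟩) (Sum.inl ⟨y,hy⟩) := by
  subst h
  rw [adj_inl_inl]
  exact ⟨Fin.ne_of_val_ne (show x ≠ x + 2 by omega), Or.inl (Or.inr ⟨h3, rfl⟩)⟩

def edgeFun (k : ℕ) : (Fin (3*k+3) ⊕ (Fin (k+1) ⊕ Fin (3*k+3))) → Sym2 (Fin (3*k+3) ⊕ Unit)
  | .inl i => s(.inl i, .inl ⟨(i.val+1) % (3*k+3), Nat.mod_lt _ (by omega)⟩)
  | .inr (.inl j) => s(.inl ⟨3*j.val, by omega⟩, .inl ⟨3*j.val+2, by omega⟩)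
  | .inr (.inr i) => s(.inl i, .inr ())

lemma range_edgeFun (k : ℕ) : Set.range (edgeFun k) = (extremalGraph k).edgeSet := by
  ext e
  induction e using Sym2.ind with
  | _ p q =>
    constructor
    · rintro ⟨a, ha⟩
      rw [← ha]
      match a with
      | .inl i =>
        rw [edgeFun, SimpleGraph.mem_edgeSet, adj_inl_inl]
        refine ⟨?_, Or.inl (Or.inl rfl)⟩
        intro hne
        have := congrArg Fin.val hne
        simp only at this
        rcases modfact (n := 3*k+3) (a := i.val+1) (by omega) with ⟨h1,h2⟩|⟨h1,h2⟩ <;> omega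
      | .inr (.inl j) =>
        rw [edgeFun, SimpleGraph.mem_edgeSet, adj_inl_inl]
        refine ⟨?_, Or.inl (Or.inr ⟨by simp, rfl⟩)⟩
        intro hne
        have := congrArg Fin.val hne
        simp only at this
        omega
      | .inr (.inr i) =>
        rw [edgeFun, SimpleGraph.mem_edgeSet]
        exact adj_inl_inr k i ()
    · intro he
      rw [SimpleGraph.mem_edgeSet] at he
      match p, q with
      | Sum.inl i, Sum.inl j =>
        rw [adj_inl_inl] at he
        obtain ⟨hne, (h|⟨h1,h2⟩)|(h|⟨h1,h2⟩)⟩ := he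
        · exact ⟨.inl i, by
            simp only [edgeFun, Sym2.eq_iff, Sum.inl.injEq, Fin.ext_iff]
            exact Or.inl ⟨trivial, h⟩⟩
        · refine ⟨.inr (.inl ⟨i.val/3, by omega⟩), ?_⟩
          simp only [edgeFun, Sym2.eq_iff, Sum.inl.injEq, Fin.ext_iff]
          exact Or.inl ⟨by omega, by omega⟩
        · exact ⟨.inl j, by
            simp only [edgeFun, Sym2.eq_iff, Sum.inl.injEq, Fin.ext_iff]
            exact Or.inr ⟨trivial, h⟩⟩
        · refine ⟨.inr (.inl ⟨j.val/3, by omega⟩), ?_⟩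
          simp only [edgeFun, Sym2.eq_iff, Sum.inl.injEq, Fin.ext_iff]
          exact Or.inr ⟨by omega, by omega⟩
      | Sum.inl i, Sum.inr u =>
        exact ⟨.inr (.inr i), by rw [edgeFun]⟩
      | Sum.inr u, Sum.inl i =>
        exact ⟨.inr (.inr i), by rw [edgeFun, Sym2.eq_swap]⟩
      | Sum.inr u, Sum.inr v =>
        exact absurd he (by simp [extremalGraph, SimpleGraph.fromRel_adj])

lemma edgeFun_inj (k : ℕ) (hk : 1 ≤ k) : Function.Injective (edgeFun k) := by
  have hm : ∀ a : Fin (3*k+3), ((a.val + 1) < 3*k+3 ∧ (a.val+1) % (3*k+3) = a.val+1) ∨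
      (3*k+3 ≤ a.val+1 ∧ (a.val+1) % (3*k+3) + (3*k+3) = a.val+1) :=
    fun a => modfact (by omega)
  intro a b h
  match a, b with
  | .inl i, .inl i' =>
    simp only [edgeFun, Sym2.eq_iff, Sum.inl.injEq, Fin.ext_iff] at h
    have : i = i' := by
      apply Fin.ext
      rcases h with ⟨h5,h6⟩|⟨h5,h6⟩ <;> rcases hm i with ⟨h1,h2⟩|⟨h1,h2⟩ <;>
        rcases hm i' with ⟨h3,h4⟩|⟨h3,h4⟩ <;> omega
    rw [this]
  | .inl i, .inr (.inl j) =>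
    simp only [edgeFun, Sym2.eq_iff, Sum.inl.injEq, Fin.ext_iff] at h
    exfalso
    rcases h with ⟨h5,h6⟩|⟨h5,h6⟩ <;> rcases hm i with ⟨h1,h2⟩|⟨h1,h2⟩ <;> omega
  | .inl i, .inr (.inr i') =>
    simp [edgeFun, Sym2.eq_iff, Fin.ext_iff] at h
  | .inr (.inl j), .inl i =>
    simp only [edgeFun, Sym2.eq_iff, Sum.inl.injEq, Fin.ext_iff] at h
    exfalso
    rcases h with ⟨h5,h6⟩|⟨h5,h6⟩ <;> rcases hm i with ⟨h1,h2⟩|⟨h1,h2⟩ <;> omega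
  | .inr (.inl j), .inr (.inl j') =>
    simp only [edgeFun, Sym2.eq_iff, Sum.inl.injEq, Fin.ext_iff] at h
    have : j = j' := by
      apply Fin.ext
      rcases h with ⟨h5,h6⟩|⟨h5,h6⟩ <;> omega
    rw [this]
  | .inr (.inl j), .inr (.inr i') =>
    simp [edgeFun, Sym2.eq_iff, Fin.ext_iff] at h
  | .inr (.inr i), .inl i' =>
    simp [edgeFun, Sym2.eq_iff, Fin.ext_iff] at h
  | .inr (.inr i), .inr (.inl j) =>
    simp [edgeFun, Sym2.eq_iff, Fin.ext_iff] at h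
  | .inr (.inr i), .inr (.inr i') =>
    simp [edgeFun, Sym2.eq_iff, Fin.ext_iff] at h
    have : i = i' := Fin.ext h
    rw [this]

lemma reach_aux (k : ℕ) (s : Set (Fin (3*k+3) ⊕ Unit)) (i0 : Fin (3*k+3))
    (hs : ∀ j : Fin (3*k+3), j ≠ i0 → (Sum.inl j : Fin (3*k+3) ⊕ Unit) ∈ s)
    (m : ℕ) (hm1 : 1 ≤ m) (hm2 : m ≤ 3*k+3)
    (h' : (Sum.inl ⟨(i0.val + m) % (3*k+3), Nat.mod_lt _ (by omega)⟩ :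
      Fin (3*k+3) ⊕ Unit) ∈ s) :
    ((extremalGraph k).induce s).Reachable
      ⟨Sum.inl ⟨(i0.val + 1) % (3*k+3), Nat.mod_lt _ (by omega)⟩, hs _ (base_ne k i0)⟩
      ⟨Sum.inl ⟨(i0.val + m) % (3*k+3), Nat.mod_lt _ (by omega)⟩, h'⟩ := by
  induction m with
  | zero => omega
  | succ m ih =>
    rcases Nat.lt_or_ge m 1 with h1|h1
    · have : m = 0 := by omega
      subst this
      rfl
    · have hmem : (Sum.inl ⟨(i0.val+m) % (3*k+3), Nat.mod_lt _ (by omega)⟩ :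
          Fin (3*k+3) ⊕ Unit) ∈ s := by
        apply hs
        intro hEq
        have := congrArg Fin.val hEq
        simp only at this
        rcases modfact (n := 3*k+3) (a := i0.val+m) (by omega) with ⟨a1,a2⟩|⟨a1,a2⟩ <;> omega
      refine (ih h1 (by omega) hmem).trans ?_
      apply SimpleGraph.Adj.reachable
      show (extremalGraph k).Adj
        (Sum.inl ⟨(i0.val + m) % (3*k+3), Nat.mod_lt _ (by omega)⟩)
        (Sum.inl ⟨(i0.val + (m+1)) % (3*k+3), Nat.mod_lt _ (by omega)⟩)
      rw [adj_inl_inl]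
      constructor
      · apply Fin.ne_of_val_ne
        show (i0.val + m) % (3*k+3) ≠ (i0.val + (m+1)) % (3*k+3)
        rw [show i0.val + (m+1) = i0.val + m + 1 from rfl,
          ← Nat.mod_add_mod (i0.val+m) (3*k+3) 1]
        intro heq
        have hx : (i0.val + m) % (3*k+3) < 3*k+3 := Nat.mod_lt _ (by omega)
        rcases modfact (n := 3*k+3) (a := (i0.val + m) % (3*k+3) + 1) (by omega) with
          ⟨b1,b2⟩|⟨b1,b2⟩ <;> omega
      · exact Or.inl (Or.inl (Nat.mod_add_mod (i0.val + m) (3*k+3) 1))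

lemma reach_all (k : ℕ) (s : Set (Fin (3*k+3) ⊕ Unit)) (i0 : Fin (3*k+3))
    (hs : ∀ j : Fin (3*k+3), j ≠ i0 → (Sum.inl j : Fin (3*k+3) ⊕ Unit) ∈ s)
    (j : Fin (3*k+3)) (h' : (Sum.inl j : Fin (3*k+3) ⊕ Unit) ∈ s) :
    ((extremalGraph k).induce s).Reachable
      ⟨Sum.inl ⟨(i0.val + 1) % (3*k+3), Nat.mod_lt _ (by omega)⟩, hs _ (base_ne k i0)⟩
      ⟨Sum.inl j, h'⟩ := by
  obtain ⟨m, hm1, hm2, hval⟩ :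
      ∃ m, 1 ≤ m ∧ m ≤ 3*k+3 ∧ (i0.val + m) % (3*k+3) = j.val := by
    rcases eq_or_ne j i0 with rfl|hne
    · exact ⟨3*k+3, by omega, le_rfl, by
        rw [Nat.add_mod_right]; exact Nat.mod_eq_of_lt j.isLt⟩
    · have hne' : j.val ≠ i0.val := fun h => hne (Fin.ext h)
      have hj := j.isLt
      have hi := i0.isLt
      rcases modfact (n := 3*k+3) (a := j.val + (3*k+3) - i0.val) (by omega) with
        ⟨a1,a2⟩|⟨a1,a2⟩
      · refine ⟨(j.val + (3*k+3) - i0.val) % (3*k+3), by omega, by omega, ?_⟩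
        rw [show i0.val + (j.val + (3*k+3) - i0.val) % (3*k+3) = j.val + (3*k+3) by omega,
          Nat.add_mod_right]
        exact Nat.mod_eq_of_lt j.isLt
      · refine ⟨(j.val + (3*k+3) - i0.val) % (3*k+3), by omega, by omega, ?_⟩
        rw [show i0.val + (j.val + (3*k+3) - i0.val) % (3*k+3) = j.val by omega]
        exact Nat.mod_eq_of_lt j.isLt
  have hj : (⟨(i0.val + m) % (3*k+3), Nat.mod_lt _ (by omega)⟩ : Fin (3*k+3)) = j :=
    Fin.ext hval
  revert h'
  rw [← hj]
  intro h'
  exact reach_aux k s i0 hs m hm1 hm2 h'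

end Helpers

/-- For every `k ≥ 1`, the graph `G_k` has `3k + 4` vertices and `7k + 7` edges, is
`3`-connected, and the neighborhood of every vertex induces a subgraph containing a
cycle. -/
theorem extremalGraph_properties (k : ℕ) (hk : 1 ≤ k) :
    Fintype.card (Fin (3 * k + 3) ⊕ Unit) = 3 * k + 4 ∧
    (extremalGraph k).edgeSet.ncard = 7 * k + 7 ∧
    KConnected 3 (extremalGraph k) ∧
    ∀ u : Fin (3 * k + 3) ⊕ Unit,
      ¬ ((extremalGraph k).induce ((extremalGraph k).neighborSet u)).IsAcyclic := by
  refine ⟨?_, ?_, ⟨?_, ?_⟩, ?_⟩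
  · simp only [Fintype.card_sum, Fintype.card_fin, Fintype.card_unit]
  · rw [← range_edgeFun k, ← Nat.card_coe_set_eq,
      Nat.card_range_of_injective (edgeFun_inj k hk), Nat.card_eq_fintype_card]
    simp only [Fintype.card_sum, Fintype.card_fin]
    omega
  · simp only [Fintype.card_sum, Fintype.card_fin, Fintype.card_unit]
    omega
  · intro S hS
    rw [SimpleGraph.connected_iff]
    by_cases hc : (Sum.inr () : Fin (3*k+3) ⊕ Unit) ∈ S
    · -- universal vertex removed; at most one cycle vertex removed
      obtain ⟨i0, hi0⟩ : ∃ i0 : Fin (3*k+3),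
          ∀ j, j ≠ i0 → (Sum.inl j : Fin (3*k+3) ⊕ Unit) ∉ S := by
        by_cases hex : ∃ i : Fin (3*k+3), (Sum.inl i : Fin (3*k+3) ⊕ Unit) ∈ S
        · obtain ⟨i0, hmem⟩ := hex
          refine ⟨i0, fun j hj hjm => ?_⟩
          have hsub : ({Sum.inr (), Sum.inl i0, Sum.inl j} :
              Finset (Fin (3*k+3) ⊕ Unit)) ⊆ S := by
            intro x hx
            simp only [Finset.mem_insert, Finset.mem_singleton] at hx
            rcases hx with rfl|rfl|rfl <;> assumption
          have hcard : ({Sum.inr (), Sum.inl i0, Sum.inl j} :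
              Finset (Fin (3*k+3) ⊕ Unit)).card = 3 := by
            rw [Finset.card_insert_of_notMem (by simp),
              Finset.card_insert_of_notMem (by simp [Ne.symm hj]),
              Finset.card_singleton]
          have := Finset.card_le_card hsub
          omega
        · push_neg at hex
          exact ⟨⟨0, by omega⟩, fun j _ => hex j⟩
      have hs : ∀ j : Fin (3*k+3), j ≠ i0 →
          (Sum.inl j : Fin (3*k+3) ⊕ Unit) ∈ (↑S : Set (Fin (3*k+3) ⊕ Unit))ᶜ :=
        fun j hj => by simpa using hi0 j hj
      set base : ↥(↑S : Set (Fin (3*k+3) ⊕ Unit))ᶜ :=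
        ⟨Sum.inl ⟨(i0.val+1) % (3*k+3), Nat.mod_lt _ (by omega)⟩,
          hs _ (base_ne k i0)⟩ with hbase
      have key : ∀ x : ↥(↑S : Set (Fin (3*k+3) ⊕ Unit))ᶜ,
          ((extremalGraph k).induce (↑S : Set (Fin (3*k+3) ⊕ Unit))ᶜ).Reachable base x := by
        rintro ⟨x, hx⟩
        match x with
        | Sum.inl j => exact reach_all k _ i0 hs j hx
        | Sum.inr () => exact absurd hx (by simp [hc])
      exact ⟨fun x y => (key x).symm.trans (key y), ⟨base⟩⟩
    · -- universal vertex still present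
      have hcm : (Sum.inr () : Fin (3*k+3) ⊕ Unit) ∈
          (↑S : Set (Fin (3*k+3) ⊕ Unit))ᶜ := by simp [hc]
      have key : ∀ x : ↥(↑S : Set (Fin (3*k+3) ⊕ Unit))ᶜ,
          ((extremalGraph k).induce (↑S : Set (Fin (3*k+3) ⊕ Unit))ᶜ).Reachable x
            ⟨Sum.inr (), hcm⟩ := by
        rintro ⟨x, hx⟩
        match x with
        | Sum.inl i =>
          exact SimpleGraph.Adj.reachable
            (show (extremalGraph k).Adj (Sum.inl i) (Sum.inr ()) from adj_inl_inr k i ())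
        | Sum.inr () => exact SimpleGraph.Reachable.refl _
      exact ⟨fun x y => (key x).trans (key y).symm, ⟨⟨Sum.inr (), hcm⟩⟩⟩
  · intro u
    match u with
    | Sum.inr () =>
      have ha : (Sum.inl (⟨0, by omega⟩ : Fin (3*k+3)) : Fin (3*k+3) ⊕ Unit) ∈
          (extremalGraph k).neighborSet (Sum.inr ()) :=
        ((extremalGraph k).mem_neighborSet _ _).mpr (adj_inl_inr k _ ()).symm
      have hb : (Sum.inl (⟨1, by omega⟩ : Fin (3*k+3)) : Fin (3*k+3) ⊕ Unit) ∈
          (extremalGraph k).neighborSet (Sum.inr ()) :=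
        ((extremalGraph k).mem_neighborSet _ _).mpr (adj_inl_inr k _ ()).symm
      have hcm : (Sum.inl (⟨2, by omega⟩ : Fin (3*k+3)) : Fin (3*k+3) ⊕ Unit) ∈
          (extremalGraph k).neighborSet (Sum.inr ()) :=
        ((extremalGraph k).mem_neighborSet _ _).mpr (adj_inl_inr k _ ()).symm
      exact triangle_not_acyclic
        (a := ⟨_, ha⟩) (b := ⟨_, hb⟩) (c := ⟨_, hcm⟩)
        (show (extremalGraph k).Adj (Sum.inl ⟨0, by omega⟩) (Sum.inl ⟨1, by omega⟩) from
          adj_cycle' k (by omega) (by omega) rfl)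
        (show (extremalGraph k).Adj (Sum.inl ⟨1, by omega⟩) (Sum.inl ⟨2, by omega⟩) from
          adj_cycle' k (by omega) (by omega) rfl)
        (show (extremalGraph k).Adj (Sum.inl ⟨2, by omega⟩) (Sum.inl ⟨0, by omega⟩) from
          (adj_chord' k (by omega) (by omega) rfl rfl).symm)
    | Sum.inl i =>
      have hiLt := i.isLt
      have hc0 : (Sum.inr () : Fin (3*k+3) ⊕ Unit) ∈
          (extremalGraph k).neighborSet (Sum.inl i) :=
        ((extremalGraph k).mem_neighborSet _ _).mpr (adj_inl_inr k i ())
      rcases (show i.val % 3 = 0 ∨ i.val % 3 = 1 ∨ i.val % 3 = 2 by omega) with h|h|h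
      · -- neighbors i+1, i+2
        have ha : (Sum.inl (⟨i.val+1, by omega⟩ : Fin (3*k+3)) : Fin (3*k+3) ⊕ Unit) ∈
            (extremalGraph k).neighborSet (Sum.inl i) :=
          ((extremalGraph k).mem_neighborSet _ _).mpr (adj_cycle' k i.isLt (by omega) rfl)
        have hb : (Sum.inl (⟨i.val+2, by omega⟩ : Fin (3*k+3)) : Fin (3*k+3) ⊕ Unit) ∈
            (extremalGraph k).neighborSet (Sum.inl i) :=
          ((extremalGraph k).mem_neighborSet _ _).mpr (adj_chord' k i.isLt (by omega) h rfl)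
        exact triangle_not_acyclic
          (a := ⟨_, ha⟩) (b := ⟨_, hb⟩) (c := ⟨_, hc0⟩)
          (show (extremalGraph k).Adj (Sum.inl ⟨i.val+1, by omega⟩)
              (Sum.inl ⟨i.val+2, by omega⟩) from adj_cycle' k (by omega) (by omega) rfl)
          (show (extremalGraph k).Adj (Sum.inl ⟨i.val+2, by omega⟩) (Sum.inr ()) from
            adj_inl_inr k _ ())
          (show (extremalGraph k).Adj (Sum.inr ()) (Sum.inl ⟨i.val+1, by omega⟩) from
            (adj_inl_inr k _ ()).symm)
      · -- neighbors i-1, i+1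
        have ha : (Sum.inl (⟨i.val-1, by omega⟩ : Fin (3*k+3)) : Fin (3*k+3) ⊕ Unit) ∈
            (extremalGraph k).neighborSet (Sum.inl i) :=
          ((extremalGraph k).mem_neighborSet _ _).mpr
            (adj_cycle' k (by omega) i.isLt (by omega)).symm
        have hb : (Sum.inl (⟨i.val+1, by omega⟩ : Fin (3*k+3)) : Fin (3*k+3) ⊕ Unit) ∈
            (extremalGraph k).neighborSet (Sum.inl i) :=
          ((extremalGraph k).mem_neighborSet _ _).mpr (adj_cycle' k i.isLt (by omega) rfl)
        exact triangle_not_acyclic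
          (a := ⟨_, ha⟩) (b := ⟨_, hb⟩) (c := ⟨_, hc0⟩)
          (show (extremalGraph k).Adj (Sum.inl ⟨i.val-1, by omega⟩)
              (Sum.inl ⟨i.val+1, by omega⟩) from
            adj_chord' k (by omega) (by omega) (by omega) (by omega))
          (show (extremalGraph k).Adj (Sum.inl ⟨i.val+1, by omega⟩) (Sum.inr ()) from
            adj_inl_inr k _ ())
          (show (extremalGraph k).Adj (Sum.inr ()) (Sum.inl ⟨i.val-1, by omega⟩) from
            (adj_inl_inr k _ ()).symm)
      · -- neighbors i-2, i-1
        have ha : (Sum.inl (⟨i.val-2, by omega⟩ : Fin (3*k+3)) : Fin (3*k+3) ⊕ Unit) ∈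
            (extremalGraph k).neighborSet (Sum.inl i) :=
          ((extremalGraph k).mem_neighborSet _ _).mpr
            (adj_chord' k (by omega) i.isLt (by omega) (by omega)).symm
        have hb : (Sum.inl (⟨i.val-1, by omega⟩ : Fin (3*k+3)) : Fin (3*k+3) ⊕ Unit) ∈
            (extremalGraph k).neighborSet (Sum.inl i) :=
          ((extremalGraph k).mem_neighborSet _ _).mpr
            (adj_cycle' k (by omega) i.isLt (by omega)).symm
        exact triangle_not_acyclic
          (a := ⟨_, ha⟩) (b := ⟨_, hb⟩) (c := ⟨_, hc0⟩)
          (show (extremalGraph k).Adj (Sum.inl ⟨i.val-2, by omega⟩)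
              (Sum.inl ⟨i.val-1, by omega⟩) from
            adj_cycle' k (by omega) (by omega) (by omega))
          (show (extremalGraph k).Adj (Sum.inl ⟨i.val-1, by omega⟩) (Sum.inr ()) from
            adj_inl_inr k _ ())
          (show (extremalGraph k).Adj (Sum.inr ()) (Sum.inl ⟨i.val-2, by omega⟩) from
            (adj_inl_inr k _ ()).symm)
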